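/- arXiv:math/0204030 — 5 statements merged into one kernel-verified Lean document; each statement's English description precedes it below -/
import Mathlib

section
/- Let n > 1 and let M_1, ..., M_{p+1} ∈ GL(n, ℂ) satisfy M_1 ⋯ M_{p+1} = I and have no common proper nonzero invariant subspace. Then for every index j, the sum over i ≠ j of min_{λ ∈ ℂ} rank(M_i − λI) is at least n. -/
/-!
If the ranks `r(M i)`, `i ≠ j`, added up to less than `n`, the kernels of `M i - λ i • 1`, with
`λ i` realising `r(M i)`, would share a nonzero vector `v`: a common eigenvector of all `M i`,
`i ≠ j`. The relation `M 0 ⋯ M p = 1` writes `M j` as `a⁻¹ * b⁻¹` with `a`, `b` products of these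
`M i`, and an invertible matrix preserving a finite-dimensional subspace preserves it under its
inverse too. So the line `ℂ ∙ v` is invariant under every `M i`, which irreducibility forbids
when `n > 1`.
-/

open Matrix Module

namespace Submodule

variable {K ι : Type*} [Fintype ι] [DecidableEq ι]

section CommSemiring

variable [CommSemiring K]

def mulVecStabilizer (W : Submodule K (ι → K)) : Submonoid (Matrix ι ι K) where
  carrier := {A | ∀ x ∈ W, A *ᵥ x ∈ W}
  one_mem' x hx := by rwa [one_mulVec]
  mul_mem' {A B} hA hB x hx := by rw [← mulVec_mulVec]; exact hA _ (hB x hx)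

theorem mem_mulVecStabilizer_span_singleton {A : Matrix ι ι K} {v : ι → K} (c : K)
    (hv : A *ᵥ v = c • v) :
    A ∈ (K ∙ v).mulVecStabilizer := by
  intro x hx
  obtain ⟨a, rfl⟩ := mem_span_singleton.1 hx
  rw [mulVec_smul, hv, smul_smul]
  exact smul_mem _ _ (mem_span_singleton_self v)

end CommSemiring

variable [Field K] {W : Submodule K (ι → K)} {A B X : Matrix ι ι K}

theorem nonsing_inv_mem_mulVecStabilizer (hA : IsUnit A.det) (hW : A ∈ W.mulVecStabilizer) :
    A⁻¹ ∈ W.mulVecStabilizer := by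
  intro x hx
  -- `A` restricts to an injective, hence surjective, endomorphism of the finite-dimensional `W`.
  have hinj : Function.Injective (A.mulVecLin.restrict hW) := fun y z hyz => Subtype.ext <|
    mulVec_injective_of_isUnit ((isUnit_iff_isUnit_det A).2 hA) (congrArg Subtype.val hyz)
  obtain ⟨y, hy⟩ := LinearMap.surjective_of_injective hinj ⟨x, hx⟩
  have hyx : A *ᵥ y = x := congrArg Subtype.val hy
  rw [← hyx, mulVec_mulVec, nonsing_inv_mul A hA, one_mulVec]
  exact y.2

theorem mem_mulVecStabilizer_of_mul_mul_eq_one (hA : A ∈ W.mulVecStabilizer)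
    (hB : B ∈ W.mulVecStabilizer) (h : A * X * B = 1) : X ∈ W.mulVecStabilizer := by
  have hAdet : IsUnit A.det := isUnit_det_of_right_inverse (by rwa [← mul_assoc])
  have hBdet : IsUnit B.det := isUnit_det_of_left_inverse h
  have hX : X = A⁻¹ * B⁻¹ := by
    rw [inv_eq_right_inv (by rwa [← mul_assoc] : A * (X * B) = 1), mul_assoc,
      mul_nonsing_inv B hBdet, mul_one]
  rw [hX]
  exact mul_mem (nonsing_inv_mem_mulVecStabilizer hAdet hA)
    (nonsing_inv_mem_mulVecStabilizer hBdet hB)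

end Submodule

theorem Submonoid.exists_mem_prod_finRange_map_eq_mul_mul {G : Type*} [Monoid G]
    (S : Submonoid G) {m : ℕ} (M : Fin m → G) (j : Fin m) (hS : ∀ i ≠ j, M i ∈ S) :
    ∃ a ∈ S, ∃ b ∈ S, ((List.finRange m).map M).prod = a * M j * b := by
  obtain ⟨s, t, hst⟩ := List.append_of_mem (List.mem_finRange j)
  have hnd : (s ++ j :: t).Nodup := hst ▸ List.nodup_finRange m
  have hmem : ∀ l : List (Fin m), j ∉ l → (l.map M).prod ∈ S := fun l hl =>
    S.list_prod_mem fun _ hx => by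
      obtain ⟨i, hi, rfl⟩ := List.mem_map.1 hx
      exact hS i (ne_of_mem_of_not_mem hi hl)
  refine ⟨_, hmem s fun hs => ?_, _, hmem t ?_, by simp [hst, mul_assoc]⟩
  · exact List.disjoint_of_nodup_append hnd hs List.mem_cons_self
  · exact (List.nodup_cons.1 (List.nodup_append.1 hnd).2.1).1

section

variable {K E F ι : Type*} [Field K] [AddCommGroup E] [Module K E] [FiniteDimensional K E]
  [AddCommGroup F] [Module K F]

theorem finrank_le_finrank_inf_ker_add_sum_finrank_range (s : Finset ι) (f : ι → E →ₗ[K] F) :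
    finrank K E ≤ finrank K (s.inf fun i => LinearMap.ker (f i) : Submodule K E) +
      ∑ i ∈ s, finrank K (LinearMap.range (f i)) := by
  classical
  induction s using Finset.induction_on with
  | empty => rw [Finset.inf_empty, finrank_top, Finset.sum_empty, add_zero]
  | insert a s ha ih =>
    rw [Finset.inf_insert, Finset.sum_insert ha]
    have hsup := Submodule.finrank_sup_add_finrank_inf_eq (LinearMap.ker (f a))
      (s.inf fun i => LinearMap.ker (f i))
    have hle := Submodule.finrank_le (LinearMap.ker (f a) ⊔ s.inf fun i => LinearMap.ker (f i))
    have hrk := (f a).finrank_range_add_finrank_ker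
    omega

theorem exists_ne_zero_forall_eq_zero_of_sum_finrank_range_lt (s : Finset ι)
    (f : ι → E →ₗ[K] F) (h : ∑ i ∈ s, finrank K (LinearMap.range (f i)) < finrank K E) :
    ∃ v ≠ 0, ∀ i ∈ s, f i v = 0 := by
  have hpos := (finrank_le_finrank_inf_ker_add_sum_finrank_range s f).trans_lt' h
  have := Module.finrank_pos_iff.1 (lt_add_iff_pos_left _ |>.1 hpos)
  obtain ⟨⟨v, hv⟩, hv0⟩ := exists_ne (0 : (s.inf fun i => LinearMap.ker (f i) : Submodule K E))
  exact ⟨v, fun h => hv0 (Subtype.ext h),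
    fun i hi => Finset.inf_le (f := fun i => LinearMap.ker (f i)) hi hv⟩

end

theorem stmt2_general (n p : ℕ) (hn : 1 < n)
    (M : Fin (p+1) → Matrix (Fin n) (Fin n) ℂ)
    (hprod : ((List.finRange (p+1)).map M).prod = 1)
    (hirr : ∀ V : Submodule ℂ (Fin n → ℂ),
      (∀ j, ∀ x ∈ V, (M j).mulVec x ∈ V) → V = ⊥ ∨ V = ⊤) :
    ∀ j, n ≤ ∑ i ∈ Finset.univ.erase j,
      ⨅ lam : ℂ, ((M i) - lam • (1 : Matrix (Fin n) (Fin n) ℂ)).rank := by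
  intro j
  by_contra! hsum
  choose lam hlam using fun i =>
    ciInf_mem fun c : ℂ => (M i - c • (1 : Matrix (Fin n) (Fin n) ℂ)).rank
  obtain ⟨v, hv0, hv⟩ := exists_ne_zero_forall_eq_zero_of_sum_finrank_range_lt
    (Finset.univ.erase j) (fun i => (M i - lam i • (1 : Matrix (Fin n) (Fin n) ℂ)).mulVecLin)
    (((Finset.sum_congr rfl fun i _ => hlam i).trans_lt hsum).trans_eq (finrank_fin_fun ℂ).symm)
  have hstab : ∀ i ≠ j, M i ∈ (ℂ ∙ v).mulVecStabilizer := fun i hi =>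
    Submodule.mem_mulVecStabilizer_span_singleton (lam i) <| by
      simpa [sub_mulVec, sub_eq_zero] using hv i (Finset.mem_erase.2 ⟨hi, Finset.mem_univ i⟩)
  obtain ⟨a, ha, b, hb, hab⟩ := Submonoid.exists_mem_prod_finRange_map_eq_mul_mul _ M j hstab
  have hj := Submodule.mem_mulVecStabilizer_of_mul_mul_eq_one ha hb (hab ▸ hprod)
  rcases hirr (ℂ ∙ v) (fun i => if hi : i = j then hi ▸ hj else hstab i hi) with hbot | htop
  · exact hv0 (Submodule.span_singleton_eq_bot.1 hbot)
  · have hline := finrank_span_singleton (K := ℂ) hv0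
    rw [htop, finrank_top, finrank_fin_fun] at hline
    omega

/-- Simpson's condition (β_n), multiplicative version: if M_1, ..., M_{p+1} ∈ GL(n, ℂ)
satisfy M_1 ⋯ M_{p+1} = I and are irreducible (no common invariant subspace other than
0 and ℂⁿ), then for every index j the sum over i ≠ j of
r(M_i) = min_{λ ∈ ℂ} rank(M_i − λI) is at least n. -/
theorem stmt2 (n p : ℕ) (hn : 1 < n)
    (M : Fin (p+1) → Matrix (Fin n) (Fin n) ℂ)
    (hU : ∀ j, IsUnit (M j))
    (hprod : ((List.finRange (p+1)).map M).prod = 1)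
    (hirr : ∀ V : Submodule ℂ (Fin n → ℂ),
      (∀ j, ∀ x ∈ V, (M j).mulVec x ∈ V) → V = ⊥ ∨ V = ⊤) :
    ∀ j, n ≤ ∑ i ∈ Finset.univ.erase j,
      ⨅ lam : ℂ, ((M i) - lam • (1 : Matrix (Fin n) (Fin n) ℂ)).rank :=
  stmt2_general n p hn M hprod hirr
end

section
/- Let n > 1 and let A_1, ..., A_{p+1} ∈ gl(n, ℂ) satisfy A_1 + ⋯ + A_{p+1} = 0 and have no common proper nonzero invariant subspace. Then for every index j, the sum over i ≠ j of min_{λ ∈ ℂ} rank(A_i − λI) is at least n. -/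
/-!
Choose `c i` with `rank (A i - c i) = r(A i)` and let `W` be the sum of the ranges of the
`A i - c i`, `i ≠ j`. Then `W` is invariant under every `A i` with `i ≠ j`, hence also under
`A j = -∑_{i ≠ j} A i`, and `dim W ≤ ∑_{i ≠ j} r(A i)`. If this sum were `< n`, irreducibility
would force `W = 0`, i.e. all `A i` scalar; but then every line is a common invariant subspace,
impossible for `n > 1`.
-/

open Matrix

lemma Submodule.finrank_finset_sup_le_sum {K V ι : Type*} [DivisionRing K] [AddCommGroup V]
    [Module K V] [FiniteDimensional K V] (s : Finset ι) (f : ι → Submodule K V) :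
    Module.finrank K ↥(s.sup f) ≤ ∑ i ∈ s, Module.finrank K ↥(f i) := by
  classical
  induction s using Finset.induction with
  | empty => simp
  | insert a s ha ih =>
    rw [Finset.sup_insert, Finset.sum_insert ha]
    exact (Submodule.finrank_add_le_finrank_add_finrank _ _).trans (by omega)

namespace Matrix

variable {K ι n : Type*} [Field K] [Fintype n] [DecidableEq n]

lemma exists_rank_sub_smul_one_eq_iInf (A : Matrix n n K) :
    ∃ c : K, (A - c • 1).rank = ⨅ l : K, (A - l • 1).rank :=
  ciInf_mem fun l : K => (A - l • 1).rank

lemma mulVec_mem_of_sum_eq_zero [Fintype ι] [DecidableEq ι] {A : ι → Matrix n n K}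
    (hsum : ∑ i, A i = 0) {j : ι} {c : ι → K} {W : Submodule K (n → K)}
    (hW : ∀ i ≠ j, ∀ x, (A i - c i • 1) *ᵥ x ∈ W) (k : ι) {x : n → K} (hx : x ∈ W) :
    A k *ᵥ x ∈ W := by
  have hne : ∀ i ≠ j, A i *ᵥ x ∈ W := fun i hi => by
    have h := W.add_mem (hW i hi x) (W.smul_mem (c i) hx)
    rwa [sub_mulVec, smul_mulVec, one_mulVec, sub_add_cancel] at h
  by_cases hk : k = j
  · subst hk
    have hAk : A k = -∑ i ∈ Finset.univ.erase k, A i :=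
      eq_neg_of_add_eq_zero_left ((Finset.add_sum_erase _ A (Finset.mem_univ k)).trans hsum)
    rw [hAk, neg_mulVec, sum_mulVec]
    exact W.neg_mem (W.sum_mem fun i hi => hne i (Finset.ne_of_mem_erase hi))
  · exact hne k hk

lemma exists_sub_smul_one_mulVec_ne_zero [Fintype ι] [DecidableEq ι]
    (hn : 1 < Fintype.card n) {A : ι → Matrix n n K} (hsum : ∑ i, A i = 0)
    (hirr : ∀ V : Submodule K (n → K), (∀ k, ∀ x ∈ V, A k *ᵥ x ∈ V) → V = ⊥ ∨ V = ⊤)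
    (j : ι) (c : ι → K) : ∃ i ≠ j, ∃ x, (A i - c i • 1) *ᵥ x ≠ 0 := by
  by_contra! hscalar
  have : Nonempty n := Fintype.card_pos_iff.1 (by omega)
  set v : n → K := Pi.single (Classical.arbitrary n) 1
  have hv : v ≠ 0 := Pi.single_ne_zero_iff.2 one_ne_zero
  have hline : ∀ i ≠ j, ∀ x, (A i - c i • 1) *ᵥ x ∈ K ∙ v := fun i hi x =>
    hscalar i hi x ▸ zero_mem _
  rcases hirr (K ∙ v) fun k x => mulVec_mem_of_sum_eq_zero hsum hline k with h | h
  · exact hv (Submodule.span_singleton_eq_bot.1 h)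
  · have h1 := finrank_span_singleton (K := K) hv
    rw [h, finrank_top, Module.finrank_fintype_fun_eq_card] at h1
    omega

theorem card_le_sum_erase_iInf_rank [Fintype ι] [DecidableEq ι]
    (hn : 1 < Fintype.card n) {A : ι → Matrix n n K} (hsum : ∑ i, A i = 0)
    (hirr : ∀ V : Submodule K (n → K), (∀ k, ∀ x ∈ V, A k *ᵥ x ∈ V) → V = ⊥ ∨ V = ⊤)
    (j : ι) : Fintype.card n ≤ ∑ i ∈ Finset.univ.erase j, ⨅ l : K, (A i - l • 1).rank := by
  by_contra! hlt
  choose c hc using fun i => (A i).exists_rank_sub_smul_one_eq_iInf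
  set W := (Finset.univ.erase j).sup fun i => LinearMap.range (A i - c i • 1).mulVecLin
  have hW : ∀ i ≠ j, ∀ x, (A i - c i • 1) *ᵥ x ∈ W := fun i hi x =>
    Finset.le_sup (f := fun i => LinearMap.range (A i - c i • 1).mulVecLin)
      (Finset.mem_erase.2 ⟨hi, Finset.mem_univ i⟩) (LinearMap.mem_range_self _ x)
  have hW_lt : Module.finrank K ↥W < Module.finrank K (n → K) := by
    calc Module.finrank K ↥W ≤ ∑ i ∈ Finset.univ.erase j, (A i - c i • 1).rank :=
          Submodule.finrank_finset_sup_le_sum _ _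
      _ < Fintype.card n := by simpa only [hc] using hlt
      _ = _ := (Module.finrank_fintype_fun_eq_card K).symm
  have hW_bot : W = ⊥ := (hirr W fun k x => mulVec_mem_of_sum_eq_zero hsum hW k).resolve_right
    (Submodule.lt_top_of_finrank_lt_finrank hW_lt).ne
  obtain ⟨i, hi, x, hx⟩ := exists_sub_smul_one_mulVec_ne_zero hn hsum hirr j c
  have h0 := hW i hi x
  rw [hW_bot, Submodule.mem_bot] at h0
  exact hx h0

end Matrix

/-- Simpson's condition (β_n), additive version: if A_1, ..., A_{p+1} ∈ gl(n, ℂ)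
satisfy A_1 + ⋯ + A_{p+1} = 0 and are irreducible (no common invariant subspace other
than 0 and ℂⁿ), then for every index j the sum over i ≠ j of
r(A_i) = min_{λ ∈ ℂ} rank(A_i − λI) is at least n. -/
theorem stmt3 (n p : ℕ) (hn : 1 < n)
    (A : Fin (p+1) → Matrix (Fin n) (Fin n) ℂ)
    (hsum : ∑ j, A j = 0)
    (hirr : ∀ V : Submodule ℂ (Fin n → ℂ),
      (∀ j, ∀ x ∈ V, (A j).mulVec x ∈ V) → V = ⊥ ∨ V = ⊤) :
    ∀ j, n ≤ ∑ i ∈ Finset.univ.erase j,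
      ⨅ lam : ℂ, ((A i) - lam • (1 : Matrix (Fin n) (Fin n) ℂ)).rank := by
  simpa only [Fintype.card_fin] using
    Matrix.card_le_sum_erase_iInf_rank (by simpa only [Fintype.card_fin] using hn) hsum hirr
end

section
/- Let V = V_1 ⊕ V_2 be a decomposition of ℂⁿ and let U = Hom(V_2, V_1) be identified with the abelian unipotent group of block matrices (I, u; 0, I). Let M_1, ..., M_{p+1} be block upper-triangular invertible matrices (with respect to V_1, V_2) satisfying M_1 ⋯ M_{p+1} = I. Then the map U^{p+1} → U sending (u_1, ..., u_{p+1}) to the product (u_1 M_1 u_1^{-1})(u_2 M_2 u_2^{-1}) ⋯ (u_{p+1} M_{p+1} u_{p+1}^{-1}) lands in U (i.e., the product is block upper-triangular with identity diagonal blocks), and, under the identification of U with its Lie algebra Hom(V_2, V_1), equals u_1 − M_1(u_1) + M_1(u_2 − M_2(u_2)) + ⋯ + M_1⋯M_p(u_{p+1} − M_{p+1}(u_{p+1})), where M_j acts on Hom(V_2, V_1) by u ↦ (M_j|_{V_1}) ∘ u ∘ (M_j|_{V_2})^{-1}. -/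
open Matrix

/-!
Write `T x` for the unipotent matrix `fromBlocks 1 x 0 1` and `M = fromBlocks A B 0 D`.
Then `M * T x = T (A * x * D⁻¹) * M`, so the conjugate `T u * M * (T u)⁻¹` equals
`T (u - A * u * D⁻¹) * M`. In a product of such factors every `T` can be moved to the left
past the preceding `M`s, which acts on it through the diagonal blocks of their product.
This leaves `T (∑ ...) * (M₁ ⋯ M_{p+1})`, and the last factor is `1`.
-/

theorem List.take_finRange_succ {k : ℕ} (j : Fin (k + 1)) :
    (finRange (k + 1)).take j = ((finRange k).take j).map Fin.castSucc := by
  rw [finRange_succ_last, take_append_of_le_length (by simpa using j.is_le), map_take]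

namespace Matrix

variable {m n R : Type*} [Fintype m] [Fintype n] [DecidableEq m] [DecidableEq n]

theorem fromBlocks_one_mul_fromBlocks_one [Semiring R] (x y : Matrix m n R) :
    fromBlocks 1 x 0 1 * fromBlocks 1 y 0 1 =
      (fromBlocks 1 (x + y) 0 1 : Matrix (m ⊕ n) (m ⊕ n) R) := by
  simp [fromBlocks_multiply, add_comm]

theorem exists_prod_map_fromBlocks_zero₂₁ [Semiring R] {ι : Type*} (l : List ι)
    (A : ι → Matrix m m R) (B : ι → Matrix m n R) (D : ι → Matrix n n R) :
    ∃ C, (l.map fun i => fromBlocks (A i) (B i) 0 (D i)).prod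
      = fromBlocks (l.map A).prod C 0 (l.map D).prod := by
  induction l with
  | nil => exact ⟨0, fromBlocks_one.symm⟩
  | cons i l ih =>
    obtain ⟨C, hC⟩ := ih
    exact ⟨A i * C + B i * (l.map D).prod, by simp [hC, fromBlocks_multiply]⟩

theorem fromBlocks_zero₂₁_mul_fromBlocks_one [CommRing R] (A : Matrix m m R) (B : Matrix m n R)
    {D : Matrix n n R} (hD : IsUnit D) (x : Matrix m n R) :
    fromBlocks A B 0 D * fromBlocks 1 x 0 1
      = fromBlocks 1 (A * x * D⁻¹) 0 1 * fromBlocks A B 0 D := by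
  simp [fromBlocks_multiply, nonsing_inv_mul_cancel_right D _ ((isUnit_iff_isUnit_det D).mp hD),
    add_comm]

theorem fromBlocks_one_conj_fromBlocks_zero₂₁ [CommRing R] (A : Matrix m m R) (B : Matrix m n R)
    {D : Matrix n n R} (hD : IsUnit D) (u : Matrix m n R) :
    fromBlocks 1 u 0 1 * fromBlocks A B 0 D * (fromBlocks 1 u 0 1)⁻¹
      = fromBlocks 1 (u - A * u * D⁻¹) 0 1 * fromBlocks A B 0 D := by
  have hinv : (fromBlocks 1 u 0 1 : Matrix (m ⊕ n) (m ⊕ n) R)⁻¹ = fromBlocks 1 (-u) 0 1 :=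
    inv_eq_right_inv (by rw [fromBlocks_one_mul_fromBlocks_one, add_neg_cancel, fromBlocks_one])
  rw [hinv, mul_assoc, fromBlocks_zero₂₁_mul_fromBlocks_one A B hD, ← mul_assoc,
    fromBlocks_one_mul_fromBlocks_one, Matrix.mul_neg, Matrix.neg_mul, sub_eq_add_neg]

theorem prod_finRange_map_fromBlocks_one_mul [CommRing R] {k : ℕ} (A : Fin k → Matrix m m R)
    (B : Fin k → Matrix m n R) (D : Fin k → Matrix n n R) (hD : ∀ j, IsUnit (D j))
    (x : Fin k → Matrix m n R) :
    ((List.finRange k).map fun j => fromBlocks 1 (x j) 0 1 * fromBlocks (A j) (B j) 0 (D j)).prod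
      = fromBlocks 1 (∑ j, (((List.finRange k).take j.val).map A).prod * x j
          * ((((List.finRange k).take j.val).map D).prod)⁻¹) 0 1
        * ((List.finRange k).map fun j => fromBlocks (A j) (B j) 0 (D j)).prod := by
  induction k with
  | zero => simp
  | succ k ih =>
    have ih' := ih (fun j => A j.castSucc) (fun j => B j.castSucc) (fun j => D j.castSucc)
      (fun j => hD _) (fun j => x j.castSucc)
    obtain ⟨C, hC⟩ := exists_prod_map_fromBlocks_zero₂₁ (List.finRange k)
      (fun j => A j.castSucc) (fun j => B j.castSucc) (fun j => D j.castSucc)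
    have hPD : IsUnit ((List.finRange k).map fun j => D j.castSucc).prod :=
      List.prod_isUnit (by simpa using fun j => hD _)
    rw [Fin.sum_univ_castSucc]
    simp only [List.take_finRange_succ]
    simp only [Fin.val_castSucc, Fin.val_last,
      List.take_of_length_le (List.length_finRange (n := k)).le, List.finRange_succ_last,
      List.map_append, List.prod_append, List.map_map, List.map_cons, List.map_nil,
      List.prod_cons, List.prod_nil, mul_one, Function.comp_def]
    rw [ih', hC, ← fromBlocks_one_mul_fromBlocks_one, mul_assoc,
      ← mul_assoc (fromBlocks _ C 0 _), fromBlocks_zero₂₁_mul_fromBlocks_one _ _ hPD]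
    simp only [mul_assoc]

end Matrix

theorem stmt13_general (a b p : ℕ)
    (A : Fin (p+1) → Matrix (Fin a) (Fin a) ℂ)
    (Bq : Fin (p+1) → Matrix (Fin a) (Fin b) ℂ)
    (D : Fin (p+1) → Matrix (Fin b) (Fin b) ℂ)
    (hD : ∀ j, IsUnit (D j))
    (M : Fin (p+1) → Matrix (Fin a ⊕ Fin b) (Fin a ⊕ Fin b) ℂ)
    (hM : ∀ j, M j = Matrix.fromBlocks (A j) (Bq j) 0 (D j))
    (hprod : ((List.finRange (p+1)).map M).prod = 1)
    (u : Fin (p+1) → Matrix (Fin a) (Fin b) ℂ) :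
    ((List.finRange (p+1)).map (fun j =>
        Matrix.fromBlocks 1 (u j) 0 1 * M j * (Matrix.fromBlocks 1 (u j) 0 1)⁻¹)).prod
      = Matrix.fromBlocks 1
          (∑ j, (((List.finRange (p+1)).take j.val).map A).prod
              * (u j - A j * u j * (D j)⁻¹)
              * ((((List.finRange (p+1)).take j.val).map D).prod)⁻¹)
          0 1 := by
  obtain rfl : M = fun j => fromBlocks (A j) (Bq j) 0 (D j) := funext hM
  simp only [fromBlocks_one_conj_fromBlocks_zero₂₁ _ _ (hD _)]
  rw [prod_finRange_map_fromBlocks_one_mul A Bq D hD, hprod, mul_one]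

/-- Block upper-triangular M_j with M_1 ⋯ M_{p+1} = I; conjugating each M_j by the
unipotent element (I, u_j; 0, I) and taking the product lands in the unipotent group U
(block upper-triangular with identity diagonal blocks), and in the identification of U
with its Lie algebra Hom(V₂, V₁) the result equals
Σ_j M_1⋯M_{j-1}(u_j − M_j(u_j)), where M acts on Hom(V₂,V₁) by u ↦ A u D⁻¹. -/
theorem stmt13 (a b p : ℕ)
    (A : Fin (p+1) → Matrix (Fin a) (Fin a) ℂ)
    (Bq : Fin (p+1) → Matrix (Fin a) (Fin b) ℂ)
    (D : Fin (p+1) → Matrix (Fin b) (Fin b) ℂ)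
    (hA : ∀ j, IsUnit (A j)) (hD : ∀ j, IsUnit (D j))
    (M : Fin (p+1) → Matrix (Fin a ⊕ Fin b) (Fin a ⊕ Fin b) ℂ)
    (hM : ∀ j, M j = Matrix.fromBlocks (A j) (Bq j) 0 (D j))
    (hprod : ((List.finRange (p+1)).map M).prod = 1)
    (u : Fin (p+1) → Matrix (Fin a) (Fin b) ℂ) :
    ((List.finRange (p+1)).map (fun j =>
        Matrix.fromBlocks 1 (u j) 0 1 * M j * (Matrix.fromBlocks 1 (u j) 0 1)⁻¹)).prod
      = Matrix.fromBlocks 1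
          (∑ j, (((List.finRange (p+1)).take j.val).map A).prod
              * (u j - A j * u j * (D j)⁻¹)
              * ((((List.finRange (p+1)).take j.val).map D).prod)⁻¹)
          0 1 :=
  stmt13_general a b p A Bq D hD M hM hprod u
end

section
/- With notation as in the preceding block-triangular setting, the linear map U^{p+1} → U, (u_1, ..., u_{p+1}) ↦ Σ_{j=1}^{p+1} M_1⋯M_{j-1}·(u_j − M_j·u_j) (where M·u denotes the action A u D^{-1} on U = Hom(V_2, V_1)) is surjective if and only if the coinvariant space U/span{u − M_j·u : u ∈ U, j = 1,...,p+1} is zero, and the dual of this coinvariant space is canonically isomorphic to the space of module homomorphisms Hom(V_1, V_2) intertwining the actions of all the M_j (i.e., linear maps f : V_1 → V_2 with f ∘ A_j = D_j ∘ f for all j); hence the map is surjective if and only if there is no nonzero intertwiner from V_1 to V_2. -/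
/-!
Write `P_i = M_1 ⋯ M_i` for the action of the prefix products on `U`. The map `Φ` telescopes:
on `u` concentrated in slot `j` it is `P_{j-1} u - P_j u`. So its range contains every partial
sum `w - P_i w` and every single term `P_{j-1} w`, with `w = v - M_j v`, hence their sum `w`.
Conversely the span `W` of the `v - M_j v` is `M_j`-stable, so it contains the range, and
`range Φ = W`.

For the dual, `tr (f (v - A v D⁻¹)) = tr ((f - D⁻¹ f A) v)`, so under the nondegenerate trace
pairing the annihilator of `W` is exactly the space of intertwiners; then use
`(U ⧸ W)* ≅ W^⊥` and `W = ⊤ ↔ W^⊥ = 0`.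
-/

open Matrix

section Telescoping

variable {R M ι : Type*} [Ring R] [AddCommGroup M] [Module R M] {n : ℕ}

def coinvariantsKer (g : ι → Module.End R M) : Submodule R M :=
  Submodule.span R {x | ∃ (v : M) (j : ι), x = v - g j v}

lemma sub_mem_coinvariantsKer (g : ι → Module.End R M) (v : M) (j : ι) :
    v - g j v ∈ coinvariantsKer g :=
  Submodule.subset_span ⟨v, j, rfl⟩

lemma apply_mem_coinvariantsKer (g : ι → Module.End R M) (j : ι) {w : M}
    (hw : w ∈ coinvariantsKer g) : g j w ∈ coinvariantsKer g := by
  simpa using (coinvariantsKer g).sub_mem hw (sub_mem_coinvariantsKer g w j)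

lemma list_prod_apply_mem_coinvariantsKer (g : ι → Module.End R M) (l : List ι) {w : M}
    (hw : w ∈ coinvariantsKer g) : (l.map g).prod w ∈ coinvariantsKer g := by
  induction l with
  | nil => simpa using hw
  | cons j l ih => simpa using apply_mem_coinvariantsKer g j ih

variable (g : Fin n → Module.End R M)

def prefixProd (i : ℕ) : Module.End R M :=
  (((List.finRange n).take i).map g).prod

lemma prefixProd_zero : prefixProd g 0 = 1 := by
  simp [prefixProd]

lemma prefixProd_succ (j : Fin n) : prefixProd g (j + 1) = prefixProd g j * g j := by
  simp [prefixProd, List.take_add_one]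

def telescopingMap : (Fin n → M) →ₗ[R] M :=
  ∑ j : Fin n, prefixProd g j ∘ₗ (1 - g j) ∘ₗ LinearMap.proj (R := R) j

lemma telescopingMap_apply (u : Fin n → M) :
    telescopingMap g u = ∑ j : Fin n, prefixProd g j (u j - g j (u j)) := by
  simp [telescopingMap, Finset.sum_sub_distrib]

lemma telescopingMap_single (j : Fin n) (v : M) :
    telescopingMap g (Pi.single j v) = prefixProd g j v - prefixProd g (j + 1) v := by
  rw [telescopingMap_apply, Finset.sum_eq_single j (fun i _ hij => by simp [hij]) (by simp),
    prefixProd_succ]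
  simp

lemma sub_prefixProd_apply_mem_range {i : ℕ} (hi : i ≤ n) (v : M) :
    v - prefixProd g i v ∈ LinearMap.range (telescopingMap g) := by
  induction i with
  | zero => simp [prefixProd_zero]
  | succ i ih =>
    have hstep := telescopingMap_single g ⟨i, hi⟩ v
    have := (LinearMap.range (telescopingMap g)).add_mem (ih (by omega))
      (LinearMap.mem_range_self _ (Pi.single ⟨i, hi⟩ v))
    rwa [hstep, sub_add_sub_cancel] at this

lemma range_telescopingMap : LinearMap.range (telescopingMap g) = coinvariantsKer g := by
  apply le_antisymm
  · rintro _ ⟨u, rfl⟩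
    rw [telescopingMap_apply]
    exact Submodule.sum_mem _ fun j _ =>
      list_prod_apply_mem_coinvariantsKer g _ (sub_mem_coinvariantsKer g (u j) j)
  · rw [coinvariantsKer, Submodule.span_le]
    rintro _ ⟨v, j, rfl⟩
    set w := v - g j v
    have hPw : prefixProd g j w = telescopingMap g (Pi.single j v) := by
      rw [telescopingMap_single, prefixProd_succ]
      simp [w]
    have := (LinearMap.range (telescopingMap g)).add_mem
      (sub_prefixProd_apply_mem_range g j.is_le' w) (LinearMap.mem_range_self _ (Pi.single j v))
    rwa [← hPw, sub_add_cancel] at this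

end Telescoping

namespace Matrix

section CommRing

variable {R m n ι : Type*} [CommRing R] [Fintype m] [Fintype n]

noncomputable def conjAct [DecidableEq n] (X : Matrix m m R) (Y : Matrix n n R) :
    Module.End R (Matrix m n R) :=
  mulRightLinearMap m R Y⁻¹ ∘ₗ mulLeftLinearMap n R X

lemma conjAct_apply [DecidableEq n] (X : Matrix m m R) (Y : Matrix n n R) (v : Matrix m n R) :
    conjAct X Y v = X * v * Y⁻¹ := rfl

lemma list_prod_map_conjAct_apply [DecidableEq m] [DecidableEq n] (l : List ι)
    (X : ι → Matrix m m R) (Y : ι → Matrix n n R) (v : Matrix m n R) :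
    (l.map fun j => conjAct (X j) (Y j)).prod v = (l.map X).prod * v * ((l.map Y).prod)⁻¹ := by
  induction l with
  | nil => simp
  | cons j l ih => simp [ih, conjAct_apply, Matrix.mul_inv_rev, Matrix.mul_assoc]

variable (R m n) in
def traceDual : Matrix n m R →ₗ[R] Module.Dual R (Matrix m n R) :=
  (mulLinearMap R).compr₂ (traceLinearMap n R R)

lemma traceDual_injective : Function.Injective (traceDual R m n) := fun _ _ h =>
  ext_iff_trace_mul_right.mpr fun v => LinearMap.congr_fun h v

def intertwiners (X : ι → Matrix m m R) (Y : ι → Matrix n n R) :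
    Submodule R (Matrix n m R) where
  carrier := {f | ∀ j, f * X j = Y j * f}
  add_mem' hf hg j := by simp [Matrix.add_mul, Matrix.mul_add, hf j, hg j]
  zero_mem' j := by simp
  smul_mem' c f hf j := by simp [Matrix.smul_mul, Matrix.mul_smul, hf j]

lemma forall_trace_mul_sub_conj_eq_zero_iff [DecidableEq n] {X : Matrix m m R}
    {Y : Matrix n n R} (hY : IsUnit Y) (f : Matrix n m R) :
    (∀ v : Matrix m n R, trace (f * (v - X * v * Y⁻¹)) = 0) ↔ f * X = Y * f := by
  have hdet := (isUnit_iff_isUnit_det Y).mp hY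
  have hcycle (v : Matrix m n R) : trace (f * (X * v * Y⁻¹)) = trace (Y⁻¹ * f * X * v) := by
    rw [← Matrix.mul_assoc, trace_mul_cycle, Matrix.mul_assoc (Y⁻¹ * f)]
  simp only [Matrix.mul_sub, trace_sub, sub_eq_zero, hcycle, ← ext_iff_trace_mul_right]
  constructor
  · intro h
    calc f * X = Y * (Y⁻¹ * (f * X)) := (mul_nonsing_inv_cancel_left _ _ hdet).symm
      _ = Y * f := by rw [← Matrix.mul_assoc Y⁻¹, ← h]
  · intro h
    rw [Matrix.mul_assoc, h, nonsing_inv_mul_cancel_left _ _ hdet]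

end CommRing

variable {K m n ι : Type*} [Field K] [Fintype m] [Fintype n]

variable (K m n) in
noncomputable def traceDualEquiv : Matrix n m K ≃ₗ[K] Module.Dual K (Matrix m n K) :=
  (traceDual K m n).linearEquivOfInjective traceDual_injective <| by
    rw [Subspace.dual_finrank_eq, Module.finrank_matrix, Module.finrank_matrix,
      mul_comm (Fintype.card n)]

lemma dualAnnihilator_coinvariantsKer_conjAct [DecidableEq n] {X : ι → Matrix m m K}
    {Y : ι → Matrix n n K} (hY : ∀ j, IsUnit (Y j)) :
    (coinvariantsKer fun j => conjAct (X j) (Y j)).dualAnnihilator =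
      (intertwiners X Y).map (traceDualEquiv K m n : Matrix n m K →ₗ[K] _) := by
  ext φ
  obtain ⟨f, rfl⟩ := (traceDualEquiv K m n).surjective φ
  rw [Submodule.mem_map_equiv, LinearEquiv.symm_apply_apply, ← SetLike.mem_coe, coinvariantsKer,
    Submodule.coe_dualAnnihilator_span]
  simp only [Set.subset_def, Set.mem_ofPred_eq, SetLike.mem_coe, LinearMap.mem_ker,
    forall_exists_index]
  constructor
  · intro h j
    exact (forall_trace_mul_sub_conj_eq_zero_iff (hY j) f).mp fun v => h _ v j rfl
  · rintro hf _ v j rfl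
    exact (forall_trace_mul_sub_conj_eq_zero_iff (hY j) f).mpr (hf j) v

noncomputable def dualCoinvariantsEquivIntertwiners [DecidableEq n] {X : ι → Matrix m m K}
    {Y : ι → Matrix n n K} (hY : ∀ j, IsUnit (Y j)) :
    Module.Dual K (Matrix m n K ⧸ coinvariantsKer fun j => conjAct (X j) (Y j)) ≃ₗ[K]
      intertwiners X Y :=
  (Submodule.dualQuotEquivDualAnnihilator _).trans <|
    (LinearEquiv.ofEq _ _ (dualAnnihilator_coinvariantsKer_conjAct hY)).trans
      ((traceDualEquiv K m n).submoduleMap _).symm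

lemma coinvariantsKer_conjAct_eq_top_iff [DecidableEq n] {X : ι → Matrix m m K}
    {Y : ι → Matrix n n K} (hY : ∀ j, IsUnit (Y j)) :
    coinvariantsKer (fun j => conjAct (X j) (Y j)) = ⊤ ↔
      ∀ f : Matrix n m K, (∀ j, f * X j = Y j * f) → f = 0 := by
  rw [← Submodule.dualAnnihilator_eq_bot_iff, dualAnnihilator_coinvariantsKer_conjAct hY,
    Submodule.map_eq_bot_iff, Submodule.eq_bot_iff]
  rfl

end Matrix

/-- With M_j = (A_j, B_j; 0, D_j) block upper-triangular, A_1⋯A_{p+1} = I and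
D_1⋯D_{p+1} = I, the linear map Φ : U^{p+1} → U = Hom(V₂,V₁),
(u_j) ↦ Σ_j M_1⋯M_{j-1}(u_j − M_j(u_j)) (with M·u = A u D⁻¹), is surjective iff the
coinvariant space U / span{u − M_j·u} vanishes; the dual of the coinvariants is
isomorphic to the space of intertwiners f : V₁ → V₂ (f A_j = D_j f); hence Φ is
surjective iff there is no nonzero intertwiner. -/
theorem stmt14 (a b p : ℕ)
    (A : Fin (p+1) → Matrix (Fin a) (Fin a) ℂ)
    (D : Fin (p+1) → Matrix (Fin b) (Fin b) ℂ)
    (hD : ∀ j, IsUnit (D j)) :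
    let Φ : (Fin (p+1) → Matrix (Fin a) (Fin b) ℂ) → Matrix (Fin a) (Fin b) ℂ :=
      fun u => ∑ j, (((List.finRange (p+1)).take j.val).map A).prod
          * (u j - A j * u j * (D j)⁻¹)
          * ((((List.finRange (p+1)).take j.val).map D).prod)⁻¹
    let W : Submodule ℂ (Matrix (Fin a) (Fin b) ℂ) :=
      Submodule.span ℂ
        {x | ∃ (v : Matrix (Fin a) (Fin b) ℂ) (j : Fin (p+1)), x = v - A j * v * (D j)⁻¹}
    let Inter : Submodule ℂ (Matrix (Fin b) (Fin a) ℂ) :=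
      { carrier := {f | ∀ j, f * A j = D j * f}
        add_mem' := by
          intro f g hf hg j
          simp [Matrix.add_mul, Matrix.mul_add, hf j, hg j]
        zero_mem' := by intro j; simp
        smul_mem' := by
          intro c f hf j
          simp [Matrix.smul_mul, Matrix.mul_smul, hf j] }
    (Function.Surjective Φ ↔ W = ⊤) ∧
    Nonempty (Module.Dual ℂ (Matrix (Fin a) (Fin b) ℂ ⧸ W) ≃ₗ[ℂ] Inter) ∧
    (Function.Surjective Φ ↔
      ∀ f : Matrix (Fin b) (Fin a) ℂ, (∀ j, f * A j = D j * f) → f = 0) := by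
  intro Φ W Inter
  let g : Fin (p+1) → Module.End ℂ (Matrix (Fin a) (Fin b) ℂ) := fun j => conjAct (A j) (D j)
  have hΦ : Φ = telescopingMap g := by
    ext u : 1
    simp only [Φ, telescopingMap_apply, prefixProd, g, list_prod_map_conjAct_apply,
      Matrix.mul_sub, Matrix.sub_mul, conjAct_apply]
  have hsurj : Function.Surjective Φ ↔ W = ⊤ := by
    rw [hΦ, ← LinearMap.range_eq_top, range_telescopingMap]
    rfl
  exact ⟨hsurj, ⟨dualCoinvariantsEquivIntertwiners hD⟩,
    hsurj.trans (coinvariantsKer_conjAct_eq_top_iff hD)⟩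
end

section
/- Let n > 1 and suppose M_1, ..., M_{p+1} ∈ GL(n, ℂ) satisfy M_1⋯M_{p+1} = I. Fix an index j and for each i ≠ j fix λ_i ∈ ℂ with Σ_{i ≠ j} rank(M_i − λ_i I) < n. Then there exists a nonzero vector v with M_i v = λ_i v for all i ≠ j and M_j v = (Π_{i ≠ j} λ_i)^{-1} v; in particular the line ℂv is a common invariant subspace of all the M_i, so the tuple is reducible. -/
open Matrix

/-!
The kernels of the maps `M i - λ i • 1`, `i ≠ j`, have codimensions summing to less than `n`,
so they share a nonzero vector `v`. Cutting the cyclic relation `M 0 ⋯ M p = 1` open at `j`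
gives `M j * Q = 1`, where `Q` is the product of the other factors taken in cyclic order, and
`Q v = (∏_{i ≠ j} λ i) • v`; hence `v = (∏_{i ≠ j} λ i) • M j v`, which forces the product to be
nonzero and `M j v = (∏_{i ≠ j} λ i)⁻¹ • v`.
-/

theorem LinearMap.exists_ne_zero_forall_apply_eq_zero {K V ι : Type*} {W : ι → Type*} [Field K]
    [AddCommGroup V] [Module K V] [FiniteDimensional K V] [∀ i, AddCommGroup (W i)]
    [∀ i, Module K (W i)] (s : Finset ι) (f : ∀ i, V →ₗ[K] W i)
    (hf : ∑ i ∈ s, Module.finrank K (f i).range < Module.finrank K V) :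
    ∃ v : V, v ≠ 0 ∧ ∀ i ∈ s, f i v = 0 := by
  let F : V →ₗ[K] ∀ i : s, (f i).range := LinearMap.pi fun i => (f i).rangeRestrict
  have hrange : Module.finrank K F.range < Module.finrank K V :=
    calc Module.finrank K F.range
        ≤ Module.finrank K (∀ i : s, (f i).range) := Submodule.finrank_le F.range
      _ = ∑ i ∈ s, Module.finrank K (f i).range := by
        rw [Module.finrank_pi_fintype, Finset.sum_coe_sort s fun i => Module.finrank K (f i).range]
      _ < Module.finrank K V := hf
  have hker : F.ker ≠ ⊥ := by
    intro h
    have := F.finrank_range_add_finrank_ker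
    rw [h, finrank_bot] at this
    omega
  obtain ⟨v, hvF, hv0⟩ := Submodule.ne_bot_iff _ |>.mp hker
  refine ⟨v, hv0, fun i hi => ?_⟩
  simpa [F] using congrArg Subtype.val (congrFun (LinearMap.mem_ker.mp hvF) ⟨i, hi⟩)

theorem Matrix.exists_ne_zero_forall_mulVec_eq_smul {K m ι : Type*} [Field K] [Fintype m]
    [DecidableEq m] (s : Finset ι) (A : ι → Matrix m m K) (μ : ι → K)
    (hrank : ∑ i ∈ s, (A i - μ i • (1 : Matrix m m K)).rank < Fintype.card m) :
    ∃ v : m → K, v ≠ 0 ∧ ∀ i ∈ s, A i *ᵥ v = μ i • v := by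
  obtain ⟨v, hv0, hv⟩ := LinearMap.exists_ne_zero_forall_apply_eq_zero s
    (fun i => (A i - μ i • (1 : Matrix m m K)).mulVecLin) (by simpa [Matrix.rank] using hrank)
  refine ⟨v, hv0, fun i hi => ?_⟩
  have := hv i hi
  rwa [mulVecLin_apply, sub_mulVec, smul_mulVec, one_mulVec, sub_eq_zero] at this

theorem Matrix.list_prod_mulVec_eq_smul {K m ι : Type*} [CommRing K] [Fintype m] [DecidableEq m]
    (A : ι → Matrix m m K) (μ : ι → K) (v : m → K) :
    ∀ l : List ι, (∀ i ∈ l, A i *ᵥ v = μ i • v) → (l.map A).prod *ᵥ v = (l.map μ).prod • v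
  | [], _ => by simp
  | a :: l, hv => by
    rw [List.map_cons, List.prod_cons, List.map_cons, List.prod_cons, ← mulVec_mulVec,
      list_prod_mulVec_eq_smul A μ v l fun i hi => hv i (List.mem_cons_of_mem a hi), mulVec_smul,
      hv a List.mem_cons_self, smul_smul, mul_comm]

theorem Matrix.mulVec_eq_inv_smul_of_mul_eq_one {K m : Type*} [Field K] [Fintype m]
    [DecidableEq m] {A B : Matrix m m K} (hAB : A * B = 1) {v : m → K} {c : K}
    (hBv : B *ᵥ v = c • v) (hv : v ≠ 0) : A *ᵥ v = c⁻¹ • v := by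
  have hv' : v = c • A *ᵥ v := by
    rw [← mulVec_smul, ← hBv, mulVec_mulVec, hAB, one_mulVec]
  have hc : c ≠ 0 := by
    rintro rfl
    exact hv (by rwa [zero_smul] at hv')
  conv_rhs => rw [hv', smul_smul, inv_mul_cancel₀ hc, one_smul]

theorem Matrix.mulVec_mem_span_singleton {K m : Type*} [CommRing K] [Fintype m] {A : Matrix m m K}
    {v : m → K} {c : K} (hv : A *ᵥ v = c • v) {x : m → K} (hx : x ∈ Submodule.span K {v}) :
    A *ᵥ x ∈ Submodule.span K {v} := by
  obtain ⟨a, rfl⟩ := Submodule.mem_span_singleton.mp hx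
  rw [mulVec_smul, hv, smul_smul]
  exact Submodule.smul_mem _ _ (Submodule.mem_span_singleton_self v)

theorem List.exists_perm_cons_mul_prod_eq_one {ι M : Type*} [Monoid M] [IsDedekindFiniteMonoid M]
    {l : List ι} {f : ι → M} (hl : (l.map f).prod = 1) {j : ι} (hj : j ∈ l) :
    ∃ T : List ι, l.Perm (j :: T) ∧ f j * (T.map f).prod = 1 := by
  obtain ⟨s, t, rfl⟩ := List.append_of_mem hj
  refine ⟨t ++ s, List.perm_middle.trans (List.perm_append_comm.cons j), ?_⟩
  simp only [List.map_append, List.map_cons, List.prod_append, List.prod_cons] at hl ⊢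
  rwa [← mul_assoc, mul_eq_one_comm]

theorem List.toFinset_eq_erase_of_perm_cons {ι : Type*} [DecidableEq ι] {l T : List ι} {j : ι}
    (hl : l.Nodup) (hperm : l.Perm (j :: T)) : T.toFinset = l.toFinset.erase j := by
  have hnd := hperm.nodup_iff.mp hl
  rw [List.toFinset_eq_of_perm _ _ hperm, List.toFinset_cons, Finset.erase_insert]
  exact List.mem_toFinset.not.mpr (List.nodup_cons.mp hnd).1

theorem stmt18_general (n p : ℕ)
    (M : Fin (p+1) → Matrix (Fin n) (Fin n) ℂ)
    (hprod : ((List.finRange (p+1)).map M).prod = 1)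
    (j : Fin (p+1)) (lam : Fin (p+1) → ℂ)
    (hrk : ∑ i ∈ Finset.univ.erase j,
        ((M i) - lam i • (1 : Matrix (Fin n) (Fin n) ℂ)).rank < n) :
    ∃ v : Fin n → ℂ, v ≠ 0 ∧
      (∀ i, i ≠ j → (M i).mulVec v = lam i • v) ∧
      (M j).mulVec v = (∏ i ∈ Finset.univ.erase j, lam i)⁻¹ • v ∧
      ∀ i, ∀ x ∈ Submodule.span ℂ {v}, (M i).mulVec x ∈ Submodule.span ℂ {v} := by
  obtain ⟨v, hv0, hv⟩ := exists_ne_zero_forall_mulVec_eq_smul _ M lam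
    (by rwa [Fintype.card_fin])
  have heig : ∀ i, i ≠ j → M i *ᵥ v = lam i • v := fun i hi => hv i (by simpa using hi)
  obtain ⟨T, hperm, hMT⟩ := List.exists_perm_cons_mul_prod_eq_one hprod (List.mem_finRange j)
  have hTnd : (j :: T).Nodup := hperm.nodup_iff.mp (List.nodup_finRange _)
  have hT : T.toFinset = Finset.univ.erase j := by
    rw [List.toFinset_eq_erase_of_perm_cons (List.nodup_finRange _) hperm, List.toFinset_finRange]
  have hTv : (T.map M).prod *ᵥ v = (∏ i ∈ Finset.univ.erase j, lam i) • v := by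
    rw [← hT, List.prod_toFinset _ hTnd.of_cons]
    refine list_prod_mulVec_eq_smul M lam v T fun i hi => heig i ?_
    rintro rfl
    exact (List.nodup_cons.mp hTnd).1 hi
  have hMj := mulVec_eq_inv_smul_of_mul_eq_one hMT hTv hv0
  refine ⟨v, hv0, heig, hMj, fun i x hx => ?_⟩
  by_cases hij : i = j
  · subst hij
    exact mulVec_mem_span_singleton hMj hx
  · exact mulVec_mem_span_singleton (heig i hij) hx

/-- Key step in the necessity of Simpson's condition (β_n): if M_1 ⋯ M_{p+1} = I and
for a fixed j the ranks of M_i − λ_i I (i ≠ j) sum to less than n, then there is a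
nonzero common eigenvector v with M_i v = λ_i v for i ≠ j and
M_j v = (∏_{i≠j} λ_i)⁻¹ v; in particular the line ℂv is invariant under all M_i, so the
tuple is reducible. -/
theorem stmt18 (n p : ℕ) (hn : 1 < n)
    (M : Fin (p+1) → Matrix (Fin n) (Fin n) ℂ)
    (hprod : ((List.finRange (p+1)).map M).prod = 1)
    (j : Fin (p+1)) (lam : Fin (p+1) → ℂ)
    (hrk : ∑ i ∈ Finset.univ.erase j,
        ((M i) - lam i • (1 : Matrix (Fin n) (Fin n) ℂ)).rank < n) :
    ∃ v : Fin n → ℂ, v ≠ 0 ∧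
      (∀ i, i ≠ j → (M i).mulVec v = lam i • v) ∧
      (M j).mulVec v = (∏ i ∈ Finset.univ.erase j, lam i)⁻¹ • v ∧
      ∀ i, ∀ x ∈ Submodule.span ℂ {v}, (M i).mulVec x ∈ Submodule.span ℂ {v} :=
  stmt18_general n p M hprod j lam hrk
end
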